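/- (Asymptotic variance of MPP̂_u.) Let U₁, U₂, … be i.i.d. pairs Uᵢ = (Xᵢ,Yᵢ) with Xᵢ ~ P and Yᵢ ~ Q. Then n · Var(MPP̂_u) → σ²_{H₁*} as n → ∞; that is, the rescaled variance of the MPP estimator converges to 4 ξ, where ξ := E[H*₁₂ H*₁₃] − (E[H*₁₂])² is the variance of the conditional expectation Var_U( E_{U'}[h(U,U')] ). -/

import Mathlib

open MeasureTheory ProbabilityTheory Filter Finset Topology

/-- `Hstar k (x,y) (x',y') = k(x,x') - k(x,y') - k(y,x')`. -/
noncomputable def Hstar {𝒳 : Type*} (k : 𝒳 → 𝒳 → ℝ) (u v : 𝒳 × 𝒳) : ℝ :=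
  k u.1 v.1 - k u.1 v.2 - k u.2 v.1

/-- The U-statistic estimator `MPP̂_u = (1/(n(n-1))) ∑_{i≠j} H*ᵢⱼ`. -/
noncomputable def MPPhat {𝒳 : Type*} (k : 𝒳 → 𝒳 → ℝ) (n : ℕ) (u : Fin n → 𝒳 × 𝒳) : ℝ :=
  ((n : ℝ) * ((n : ℝ) - 1))⁻¹ *
    ∑ i : Fin n, ∑ j ∈ Finset.univ.erase i, Hstar k (u i) (u j)

/-- `σ²_{H₁*} = 4 (E[H*₁₂ H*₁₃] - (E[H*₁₂])²) = 4 ξ`, expectations over i.i.d.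
pairs with common law `m`, written as iterated integrals. -/
noncomputable def sigmaSqPop {𝒳 : Type*} [MeasurableSpace 𝒳]
    (m : Measure (𝒳 × 𝒳)) (k : 𝒳 → 𝒳 → ℝ) : ℝ :=
  4 * ((∫ u, (∫ v, (∫ w, Hstar k u v * Hstar k u w ∂m) ∂m) ∂m)
    - (∫ u, (∫ v, Hstar k u v ∂m) ∂m) ^ 2)

/-! `MPP̂_u` is a U-statistic of order two with the bounded symmetric kernel `H*`, so its variance
can be computed exactly by expanding the square of `∑_{i ≠ j} H*ᵢⱼ`. For ordered pairs `i ≠ j`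
and `r ≠ s` of indices, `E[H*ᵢⱼ H*ᵣₛ]` equals `E[H*₁₂²]` if `{r, s} = {i, j}` (two choices of
`(r, s)`), `E[H*₁₂ H*₁₃]` if the pairs share one index (`4 (n - 2)` choices) and `(E H*₁₂)²` if
they are disjoint. With `ζ₁ = E[H*₁₂ H*₁₃] - (E H*₁₂)²` and `ζ₂ = E[H*₁₂²] - (E H*₁₂)²` this
gives `n Var(MPP̂_u) = (2 ζ₂ + 4 (n - 2) ζ₁) / (n - 1)`, which tends to `4 ζ₁ = σ²_{H₁*}`. -/

section Counting

variable {ι R : Type*} [DecidableEq ι] [CommRing R] {s : Finset ι} {f : ι → R} {c : R}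

lemma sum_eq_add_card_sub_one_mul {a : ι} (ha : a ∈ s) (hf : ∀ q ∈ s, q ≠ a → f q = c) :
    ∑ q ∈ s, f q = f a + (#s - 1) * c := by
  rw [← add_sum_erase s f ha, sum_congr rfl fun q hq => hf q (mem_of_mem_erase hq)
    (ne_of_mem_erase hq), sum_const, nsmul_eq_mul, cast_card_erase_of_mem ha]

lemma sum_eq_add_add_card_sub_two_mul {a b : ι} (ha : a ∈ s) (hb : b ∈ s) (hab : a ≠ b)
    (hf : ∀ q ∈ s, q ≠ a → q ≠ b → f q = c) :
    ∑ q ∈ s, f q = f a + f b + (#s - 2) * c := by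
  rw [← add_sum_erase s f ha, sum_eq_add_card_sub_one_mul (mem_erase.2 ⟨hab.symm, hb⟩)
    fun q hq => hf q (mem_of_mem_erase hq) (ne_of_mem_erase hq), cast_card_erase_of_mem ha]
  ring

end Counting

lemma Measurable.integrable_of_abs_le {β : Type*} [MeasurableSpace β] {ρ : Measure β}
    [IsFiniteMeasure ρ] {f : β → ℝ} (hf : Measurable f) {c : ℝ} (hfc : ∀ x, |f x| ≤ c) :
    Integrable f ρ :=
  .of_bound hf.aestronglyMeasurable c (ae_of_all _ hfc)

lemma abs_mul_le_of_abs_le {a b c : ℝ} (ha : |a| ≤ c) (hb : |b| ≤ c) : |a * b| ≤ c * c :=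
  abs_mul a b ▸ mul_le_mul ha hb (abs_nonneg b) ((abs_nonneg a).trans ha)

lemma integral_sum_sum {Ω ι κ : Type*} [MeasurableSpace Ω] {μ : Measure Ω} {s : Finset ι}
    {t : ι → Finset κ} {f : ι → κ → Ω → ℝ} (hf : ∀ i j, Integrable (f i j) μ) :
    ∫ ω, ∑ i ∈ s, ∑ j ∈ t i, f i j ω ∂μ = ∑ i ∈ s, ∑ j ∈ t i, ∫ ω, f i j ω ∂μ := by
  rw [integral_finsetSum _ fun i _ => integrable_finsetSum _ fun j _ => hf i j]
  exact sum_congr rfl fun i _ => integral_finsetSum _ fun j _ => hf i j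

lemma cast_card_univ_erase {R : Type*} [AddGroupWithOne R] {n : ℕ} (i : Fin n) :
    (#(univ.erase i) : R) = n - 1 := by
  rw [cast_card_erase_of_mem (mem_univ i), card_univ, Fintype.card_fin]

def offDiagSum {α : Type*} (h : α → α → ℝ) {n : ℕ} (u : Fin n → α) : ℝ :=
  ∑ i, ∑ j ∈ univ.erase i, h (u i) (u j)

noncomputable def uStatistic {α : Type*} (h : α → α → ℝ) {n : ℕ} (u : Fin n → α) : ℝ :=
  ((n : ℝ) * (n - 1))⁻¹ * offDiagSum h u

section Moments

variable {α : Type*} [MeasurableSpace α]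

noncomputable def kernelMean (h : α → α → ℝ) (m : Measure α) : ℝ :=
  ∫ x, ∫ y, h x y ∂m ∂m

noncomputable def kernelSqMean (h : α → α → ℝ) (m : Measure α) : ℝ :=
  ∫ x, ∫ y, h x y * h x y ∂m ∂m

noncomputable def kernelCrossMean (h : α → α → ℝ) (m : Measure α) : ℝ :=
  ∫ x, ∫ y, ∫ z, h x y * h x z ∂m ∂m ∂m

end Moments

section IID

variable {α Ω : Type*} [MeasurableSpace α] [MeasurableSpace Ω] {μ : Measure Ω}
  [IsProbabilityMeasure μ] {m : Measure α} {U : ℕ → Ω → α}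
  (hU : ∀ i, Measurable (U i)) (hindep : iIndepFun U μ) (hlaw : ∀ i, μ.map (U i) = m)
include hU hindep hlaw

lemma map_pair_eq_prod {a b : ℕ} (hab : a ≠ b) :
    μ.map (fun ω => (U a ω, U b ω)) = m.prod m := by
  rw [(indepFun_iff_map_prod_eq_prod_map_map (hU a).aemeasurable (hU b).aemeasurable).1
    (hindep.indepFun hab), hlaw, hlaw]

lemma map_triple_eq_prod {a b c : ℕ} (hab : a ≠ b) (hac : a ≠ c) (hbc : b ≠ c) :
    μ.map (fun ω => (U a ω, U b ω, U c ω)) = m.prod (m.prod m) := by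
  rw [(indepFun_iff_map_prod_eq_prod_map_map (hU a).aemeasurable
      ((hU b).prodMk (hU c)).aemeasurable).1
      (hindep.indepFun_prodMk hU b c a hab.symm hac.symm).symm,
    hlaw, map_pair_eq_prod hU hindep hlaw hbc]

lemma integral_comp_pair [IsFiniteMeasure m] {F : α → α → ℝ}
    (hF : Integrable (Function.uncurry F) (m.prod m)) {a b : ℕ} (hab : a ≠ b) :
    ∫ ω, F (U a ω) (U b ω) ∂μ = ∫ x, ∫ y, F x y ∂m ∂m := by
  have hmap := map_pair_eq_prod hU hindep hlaw hab
  calc ∫ ω, F (U a ω) (U b ω) ∂μ = ∫ x, Function.uncurry F x ∂(m.prod m) := by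
        rw [← hmap, integral_map ((hU a).prodMk (hU b)).aemeasurable (hmap ▸ hF.1)]; rfl
    _ = _ := integral_prod _ hF

lemma integral_comp_triple [IsFiniteMeasure m] {F : α → α → α → ℝ}
    (hF : Integrable (fun x : α × α × α => F x.1 x.2.1 x.2.2) (m.prod (m.prod m))) {a b c : ℕ}
    (hab : a ≠ b) (hac : a ≠ c) (hbc : b ≠ c) :
    ∫ ω, F (U a ω) (U b ω) (U c ω) ∂μ = ∫ x, ∫ y, ∫ z, F x y z ∂m ∂m ∂m := by
  have hmap := map_triple_eq_prod hU hindep hlaw hab hac hbc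
  calc ∫ ω, F (U a ω) (U b ω) (U c ω) ∂μ = ∫ x, F x.1 x.2.1 x.2.2 ∂(m.prod (m.prod m)) := by
        rw [← hmap, integral_map ((hU a).prodMk ((hU b).prodMk (hU c))).aemeasurable
          (hmap ▸ hF.1)]
    _ = ∫ x, ∫ yz, F x yz.1 yz.2 ∂(m.prod m) ∂m := integral_prod _ hF
    _ = _ := by
        refine integral_congr_ae ?_
        filter_upwards [hF.prod_right_ae] with x hx
        exact integral_prod _ hx

variable [IsFiniteMeasure m] {h : α → α → ℝ} (hh : Measurable (Function.uncurry h)) {c : ℝ}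
  (hc : ∀ x y, |h x y| ≤ c)
include hh hc

lemma integral_kernel {a b : ℕ} (hab : a ≠ b) :
    ∫ ω, h (U a ω) (U b ω) ∂μ = kernelMean h m :=
  integral_comp_pair hU hindep hlaw (hh.integrable_of_abs_le fun x => hc x.1 x.2) hab

lemma integral_kernel_mul_self {a b : ℕ} (hab : a ≠ b) :
    ∫ ω, h (U a ω) (U b ω) * h (U a ω) (U b ω) ∂μ = kernelSqMean h m :=
  integral_comp_pair hU hindep hlaw (F := fun x y => h x y * h x y)
    ((hh.mul hh).integrable_of_abs_le fun x => abs_mul_le_of_abs_le (hc x.1 x.2) (hc x.1 x.2)) hab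

lemma integral_kernel_mul_kernel_shared_left {a b d : ℕ} (hab : a ≠ b) (had : a ≠ d) (hbd : b ≠ d) :
    ∫ ω, h (U a ω) (U b ω) * h (U a ω) (U d ω) ∂μ = kernelCrossMean h m :=
  integral_comp_triple hU hindep hlaw (F := fun x y z => h x y * h x z)
    (((hh.comp (measurable_fst.prodMk measurable_snd.fst)).mul
      (hh.comp (measurable_fst.prodMk measurable_snd.snd))).integrable_of_abs_le
      fun _ => abs_mul_le_of_abs_le (hc _ _) (hc _ _)) hab had hbd

lemma integral_kernel_mul_kernel_of_disjoint {a b d e : ℕ} (hab : a ≠ b) (hde : d ≠ e)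
    (had : a ≠ d) (hae : a ≠ e) (hbd : b ≠ d) (hbe : b ≠ e) :
    ∫ ω, h (U a ω) (U b ω) * h (U d ω) (U e ω) ∂μ = kernelMean h m ^ 2 := by
  have hind := (hindep.indepFun_prodMk_prodMk hU a b d e had hae hbd hbe).comp hh hh
  calc _ = (∫ ω, h (U a ω) (U b ω) ∂μ) * ∫ ω, h (U d ω) (U e ω) ∂μ :=
        hind.integral_mul_eq_mul_integral (hh.comp ((hU a).prodMk (hU b))).aestronglyMeasurable
          (hh.comp ((hU d).prodMk (hU e))).aestronglyMeasurable
    _ = _ := by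
        rw [integral_kernel hU hindep hlaw hh hc hab, integral_kernel hU hindep hlaw hh hc hde, sq]

lemma sum_integral_kernel_mul_kernel (hsymm : ∀ x y, h x y = h y x) {n : ℕ} {i j : Fin n}
    (hij : i ≠ j) :
    ∑ p : Fin n, ∑ q ∈ univ.erase p, ∫ ω, h (U i ω) (U j ω) * h (U p ω) (U q ω) ∂μ
      = 2 * kernelSqMean h m + 4 * (n - 2) * kernelCrossMean h m
        + (n - 2) * (n - 3) * kernelMean h m ^ 2 := by
  have hne {a b : Fin n} (hab : a ≠ b) : (a : ℕ) ≠ b := Fin.val_injective.ne hab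
  have hcross {a b d : ℕ} (hab : a ≠ b) (had : a ≠ d) (hbd : b ≠ d) :=
    integral_kernel_mul_kernel_shared_left hU hindep hlaw hh hc hab had hbd
  -- The rows `p = i` and `p = j` each contribute `E[h²] + (n - 2) C`; every other row `p`
  -- meets `{i, j}` exactly at `q = i` and `q = j` and contributes `2 C + (n - 3) θ²`.
  rw [sum_eq_add_add_card_sub_two_mul (mem_univ i) (mem_univ j) hij
    (c := 2 * kernelCrossMean h m + (n - 3) * kernelMean h m ^ 2)]
  · rw [sum_eq_add_card_sub_one_mul (mem_erase.2 ⟨hij.symm, mem_univ j⟩)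
        (c := kernelCrossMean h m),
      sum_eq_add_card_sub_one_mul (mem_erase.2 ⟨hij, mem_univ i⟩) (c := kernelCrossMean h m),
      cast_card_univ_erase, cast_card_univ_erase, card_univ, Fintype.card_fin]
    · simp only [hsymm (U j _) (U i _)]
      rw [integral_kernel_mul_self hU hindep hlaw hh hc (hne hij)]
      ring
    · intro q hq hqi
      simp only [hsymm (U i _) (U j _)]
      exact hcross (hne hij.symm) (hne (ne_of_mem_erase hq).symm) (hne hqi.symm)
    · intro q hq hqj
      exact hcross (hne hij) (hne (ne_of_mem_erase hq).symm) (hne hqj.symm)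
  · intro p _ hpi hpj
    rw [sum_eq_add_add_card_sub_two_mul (mem_erase.2 ⟨hpi.symm, mem_univ i⟩)
        (mem_erase.2 ⟨hpj.symm, mem_univ j⟩) hij (c := kernelMean h m ^ 2), cast_card_univ_erase]
    · simp only [hsymm (U p _)]
      rw [hcross (hne hij) (hne hpi.symm) (hne hpj.symm)]
      simp only [hsymm (U i _) (U j _)]
      rw [hcross (hne hij.symm) (hne hpj.symm) (hne hpi.symm)]
      ring
    · intro q hq hqi hqj
      exact integral_kernel_mul_kernel_of_disjoint hU hindep hlaw hh hc (hne hij)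
        (hne (ne_of_mem_erase hq).symm) (hne hpi.symm) (hne hqi.symm) (hne hpj.symm) (hne hqj.symm)

lemma integral_offDiagSum (n : ℕ) :
    ∫ ω, offDiagSum h (fun i : Fin n => U i ω) ∂μ
      = n * (n - 1) * kernelMean h m := by
  unfold offDiagSum
  rw [integral_sum_sum (f := fun (a b : Fin n) ω => h (U a ω) (U b ω))
    fun a b => (hh.comp ((hU a).prodMk (hU b))).integrable_of_abs_le fun _ => hc _ _]
  rw [sum_congr rfl fun i _ => sum_congr rfl fun j hj =>
    integral_kernel hU hindep hlaw hh hc (Fin.val_injective.ne (ne_of_mem_erase hj).symm)]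
  simp only [sum_const, nsmul_eq_mul, cast_card_univ_erase, card_univ, Fintype.card_fin]
  ring

lemma integral_offDiagSum_sq (hsymm : ∀ x y, h x y = h y x) (n : ℕ) :
    ∫ ω, offDiagSum h (fun i : Fin n => U i ω) ^ 2 ∂μ
      = n * (n - 1) * (2 * kernelSqMean h m + 4 * (n - 2) * kernelCrossMean h m
        + (n - 2) * (n - 3) * kernelMean h m ^ 2) := by
  have hint (a b d e : Fin n) : Integrable (fun ω => h (U a ω) (U b ω) * h (U d ω) (U e ω)) μ :=
    ((hh.comp ((hU a).prodMk (hU b))).mul (hh.comp ((hU d).prodMk (hU e)))).integrable_of_abs_le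
      fun _ => abs_mul_le_of_abs_le (hc _ _) (hc _ _)
  have hrow {i j : Fin n} (hij : i ≠ j) :
      ∫ ω, ∑ p : Fin n, ∑ q ∈ univ.erase p, h (U i ω) (U j ω) * h (U p ω) (U q ω) ∂μ
        = 2 * kernelSqMean h m + 4 * (n - 2) * kernelCrossMean h m
          + (n - 2) * (n - 3) * kernelMean h m ^ 2 :=
    (integral_sum_sum fun p q => hint i j p q).trans
      (sum_integral_kernel_mul_kernel hU hindep hlaw hh hc hsymm hij)
  conv_lhs => simp only [offDiagSum, sq, sum_mul]
  conv_lhs => simp only [mul_sum]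
  rw [integral_sum_sum (f := fun (i j : Fin n) ω =>
      ∑ p : Fin n, ∑ q ∈ univ.erase p, h (U i ω) (U j ω) * h (U p ω) (U q ω))
    fun i j => integrable_finsetSum _ fun p _ => integrable_finsetSum _ fun q _ => hint i j p q]
  rw [sum_congr rfl fun i _ => sum_congr rfl fun j hj => hrow (ne_of_mem_erase hj).symm]
  simp only [sum_const, nsmul_eq_mul, cast_card_univ_erase, card_univ, Fintype.card_fin]
  ring

lemma variance_offDiagSum (hsymm : ∀ x y, h x y = h y x) (n : ℕ) :
    variance (fun ω => offDiagSum h fun i : Fin n => U i ω) μ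
      = n * (n - 1) * (2 * (kernelSqMean h m - kernelMean h m ^ 2)
        + 4 * (n - 2) * (kernelCrossMean h m - kernelMean h m ^ 2)) := by
  have hL2 : MemLp (fun ω => offDiagSum h fun i : Fin n => U i ω) 2 μ :=
    memLp_finsetSum _ fun i _ => memLp_finsetSum _ fun j _ =>
      .of_bound (hh.comp ((hU i).prodMk (hU j))).aestronglyMeasurable c
        (ae_of_all _ fun _ => hc _ _)
  rw [variance_eq_sub hL2]
  simp only [Pi.pow_apply]
  rw [integral_offDiagSum_sq hU hindep hlaw hh hc hsymm, integral_offDiagSum hU hindep hlaw hh hc]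
  ring

theorem tendsto_mul_variance_uStatistic (hsymm : ∀ x y, h x y = h y x) :
    Tendsto (fun n : ℕ => n * variance (fun ω => uStatistic h fun i : Fin n => U i ω) μ) atTop
      (𝓝 (4 * (kernelCrossMean h m - kernelMean h m ^ 2))) := by
  set ζ₁ := kernelCrossMean h m - kernelMean h m ^ 2
  set ζ₂ := kernelSqMean h m - kernelMean h m ^ 2
  have hvar {n : ℕ} (hn : 2 ≤ n) :
      n * variance (fun ω => uStatistic h fun i : Fin n => U i ω) μ
        = 4 * ζ₁ + (2 * ζ₂ - 4 * ζ₁) / (n - 1) := by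
    have hn' : (n : ℝ) - 1 ≠ 0 := by
      have : (2 : ℝ) ≤ n := by exact_mod_cast hn
      linarith
    unfold uStatistic
    rw [variance_const_mul, variance_offDiagSum hU hindep hlaw hh hc hsymm]
    simp only [ζ₁, ζ₂]
    field_simp
    ring
  have hlim : Tendsto (fun n : ℕ => 4 * ζ₁ + (2 * ζ₂ - 4 * ζ₁) / ((n : ℝ) - 1)) atTop
      (𝓝 (4 * ζ₁)) := by
    have hden : Tendsto (fun n : ℕ => (n : ℝ) - 1) atTop atTop :=
      tendsto_atTop_add_const_right _ (-1) tendsto_natCast_atTop_atTop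
    simpa using tendsto_const_nhds.add (tendsto_const_nhds.div_atTop hden)
  exact hlim.congr' ((eventually_ge_atTop 2).mono fun n hn => (hvar hn).symm)

end IID

section Hstar

variable {𝒳 : Type*} {k : 𝒳 → 𝒳 → ℝ}

lemma Hstar_comm (hsymm : ∀ x x', k x x' = k x' x) (u v : 𝒳 × 𝒳) :
    Hstar k u v = Hstar k v u := by
  simp only [Hstar, hsymm v.1 u.1, hsymm v.1 u.2, hsymm v.2 u.1]
  ring

lemma abs_Hstar_le {ν : ℝ} (hbound : ∀ x x', |k x x'| ≤ ν) (u v : 𝒳 × 𝒳) :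
    |Hstar k u v| ≤ 3 * ν := by
  have h₁ := abs_le.1 (hbound u.1 v.1)
  have h₂ := abs_le.1 (hbound u.1 v.2)
  have h₃ := abs_le.1 (hbound u.2 v.1)
  rw [Hstar, abs_le]
  constructor <;> linarith

lemma measurable_Hstar [MeasurableSpace 𝒳] (hk : Measurable (Function.uncurry k)) :
    Measurable (Function.uncurry (Hstar k)) :=
  ((hk.comp (measurable_fst.fst.prodMk measurable_snd.fst)).sub
    (hk.comp (measurable_fst.fst.prodMk measurable_snd.snd))).sub
    (hk.comp (measurable_fst.snd.prodMk measurable_snd.fst))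

end Hstar

theorem mpphat_asymptotic_variance_general {𝒳 Ω₀ : Type*} [MeasurableSpace 𝒳] [MeasurableSpace Ω₀]
    (μ : Measure Ω₀) [IsProbabilityMeasure μ]
    (m : Measure (𝒳 × 𝒳)) [IsProbabilityMeasure m]
    (k : 𝒳 → 𝒳 → ℝ) (ν : ℝ)
    (hk : Measurable (Function.uncurry k))
    (hsymm : ∀ x x', k x x' = k x' x)
    (hbound : ∀ x x', |k x x'| ≤ ν)
    (U : ℕ → Ω₀ → 𝒳 × 𝒳)
    (hU : ∀ i, Measurable (U i))
    (hindep : iIndepFun U μ)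
    (hlaw : ∀ i, Measure.map (U i) μ = m) :
    Tendsto
      (fun n : ℕ =>
        (n : ℝ) * variance (fun ω => MPPhat k n (fun i => U i.val ω)) μ)
      atTop (𝓝 (sigmaSqPop m k)) :=
  -- Definitionally `MPPhat k n = uStatistic (Hstar k)` and
  -- `sigmaSqPop m k = 4 * (kernelCrossMean (Hstar k) m - kernelMean (Hstar k) m ^ 2)`.
  tendsto_mul_variance_uStatistic hU hindep hlaw (measurable_Hstar hk) (abs_Hstar_le hbound)
    (Hstar_comm hsymm)

/-- Asymptotic variance of `MPP̂_u`: `n · Var(MPP̂_u) → σ²_{H₁*} = 4ξ` as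
`n → ∞`. -/
theorem mpphat_asymptotic_variance {𝒳 Ω₀ : Type*} [MeasurableSpace 𝒳] [MeasurableSpace Ω₀]
    (μ : Measure Ω₀) [IsProbabilityMeasure μ]
    (P Q : Measure 𝒳) [IsProbabilityMeasure P] [IsProbabilityMeasure Q]
    (m : Measure (𝒳 × 𝒳)) [IsProbabilityMeasure m]
    (k : 𝒳 → 𝒳 → ℝ) (ν : ℝ)
    (hk : Measurable (Function.uncurry k))
    (hsymm : ∀ x x', k x x' = k x' x)
    (hbound : ∀ x x', |k x x'| ≤ ν)
    (U : ℕ → Ω₀ → 𝒳 × 𝒳)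
    (hU : ∀ i, Measurable (U i))
    (hindep : iIndepFun U μ)
    (hlaw : ∀ i, Measure.map (U i) μ = m)
    (hmP : m.map Prod.fst = P) (hmQ : m.map Prod.snd = Q) :
    Tendsto
      (fun n : ℕ =>
        (n : ℝ) * variance (fun ω => MPPhat k n (fun i => U i.val ω)) μ)
      atTop (𝓝 (sigmaSqPop m k)) :=
  mpphat_asymptotic_variance_general μ m k ν hk hsymm hbound U hU hindep hlaw
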